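/- If (C, ▷, Tr) is a uniform guarded traced cartesian category, then the induced dagger †_Tr, f^{†_Tr} = Tr^X_{A,X}(⟨f,f⟩), is uniform: whenever h ∘ f = g ∘ (▷h × id_A) for f : ▷X × A → X, g : ▷X' × A → X', h : X → X', then h ∘ f^{†_Tr} = g^{†_Tr}. -/
import Mathlib


open CategoryTheory CategoryTheory.Limits

/-- If `(C, ▷, Tr)` is a uniform guarded traced cartesian category, then the induced
dagger `f^{†_Tr} = Tr^X_{A,X}⟨f,f⟩` is uniform: `h ∘ f = g ∘ (▷h × id_A)` implies
`h ∘ f^{†_Tr} = g^{†_Tr}`. -/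
theorem stmt16 {C : Type*} [Category C] [HasFiniteProducts C]
    (F : C ⥤ C) (p : 𝟭 C ⟶ F)
    (Tr : ∀ {X A B : C}, (F.obj X ⨯ A ⟶ X ⨯ B) → (A ⟶ B))
    (hleft : ∀ {X A A' B : C} (f : F.obj X ⨯ A ⟶ X ⨯ B) (g : A' ⟶ A),
      Tr (prod.map (𝟙 (F.obj X)) g ≫ f) = g ≫ Tr f)
    (hright : ∀ {X A B B' : C} (f : F.obj X ⨯ A ⟶ X ⨯ B) (g : B ⟶ B'),
      Tr (f ≫ prod.map (𝟙 X) g) = Tr f ≫ g)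
    (hslide : ∀ {X X' A B : C} (f : F.obj X ⨯ A ⟶ X' ⨯ B) (g : X' ⟶ X),
      Tr (f ≫ prod.map g (𝟙 B)) = Tr (prod.map (F.map g) (𝟙 A) ≫ f))
    (hvan1 : ∀ {A B : C} (f : F.obj (⊤_ C) ⨯ A ⟶ (⊤_ C) ⨯ B),
      Tr f = prod.lift (terminal.from A ≫ p.app (⊤_ C)) (𝟙 A) ≫ f ≫ prod.snd)
    (hvan2 : ∀ {X Y A B : C} (f : F.obj X ⨯ (F.obj Y ⨯ A) ⟶ X ⨯ (Y ⨯ B)),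
      Tr (Tr f) =
        Tr (prod.map (prod.lift (F.map prod.fst) (F.map prod.snd)) (𝟙 A) ≫
          (prod.associator (F.obj X) (F.obj Y) A).hom ≫ f ≫ (prod.associator X Y B).inv))
    (hsuper : ∀ {X A B D : C} (f : F.obj X ⨯ A ⟶ X ⨯ B),
      Tr ((prod.associator (F.obj X) A D).inv ≫ prod.map f (𝟙 D) ≫
          (prod.associator X B D).hom)
        = prod.map (Tr f) (𝟙 D))
    (hyank : ∀ X : C,
      Tr (prod.lift (prod.snd : F.obj X ⨯ X ⟶ X) prod.fst) = p.app X)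
    (hunifTr : ∀ {X X' A B : C} (f : F.obj X ⨯ A ⟶ X ⨯ B) (f' : F.obj X' ⨯ A ⟶ X' ⨯ B)
      (h : X ⟶ X'),
      f ≫ prod.map h (𝟙 B) = prod.map (F.map h) (𝟙 A) ≫ f' → Tr f = Tr f') :
    ∀ {X X' A : C} (f : F.obj X ⨯ A ⟶ X) (g : F.obj X' ⨯ A ⟶ X') (h : X ⟶ X'),
      f ≫ h = prod.map (F.map h) (𝟙 A) ≫ g →
        Tr (prod.lift f f) ≫ h = Tr (prod.lift g g) := by
  intro X X' A f g h hfg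
  rw [← hright (prod.lift f f) h]
  apply hunifTr _ _ h
  apply Limits.prod.hom_ext <;>
    simp [hfg]
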